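/- arXiv:1702.08213 — 4 statements merged into one kernel-verified Lean document; each statement's English description precedes it below -/
import Mathlib

section
/- (Positive invariance of the slow manifold, pathwise.) Let T ≥ 0 and let (x̂, ŷ) : (−∞, T] → E₁ × E₂ be continuous, satisfying for all u ≤ t ≤ T the variation-of-constants identities x̂(t) = exp((t−u)S)x̂(u) + ∫_u^t exp((t−s)S) ĝ₁(s, x̂(s), ŷ(s)) ds and ŷ(t) = exp(((t−u)/ε)F) ŷ(u) + (1/ε)∫_u^t exp(((t−s)/ε)F) ĝ₂(s, x̂(s), ŷ(s)) ds, and suppose the restriction of (x̂, ŷ) to (−∞,0] belongs to C_β^−(E₁ × E₂). Then for every s ∈ [0, T], the shifted function t ↦ (x̂(t+s), ŷ(t+s)), t ≤ 0, also belongs to C_β^−(E₁ × E₂), and ŷ(s) = (1/ε)∫_{−∞}^s exp(((s−r)/ε)F) ĝ₂(r, x̂(r), ŷ(r)) dr; that is, the shifted trajectory is a C_β^− solution of the Lyapunov–Perron integral equation associated with the time-shifted nonlinearities (r,x,y) ↦ ĝᵢ(r+s, x, y) and slow initial value x̂(s). -/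
open MeasureTheory Real Filter

noncomputable section

/-- Weighted sup-norm `sup_{t ≤ 0} e^{-β t} ‖φ t‖` on `(-∞,0]`. -/
def negNorm {E : Type*} [NormedAddCommGroup E] (β : ℝ) (φ : ℝ → E) : ℝ :=
  ⨆ t : Set.Iic (0 : ℝ), Real.exp (-β * t.1) * ‖φ t.1‖

/-- Membership in the Banach space `C_β^-(E)` of continuous functions on `(-∞,0]`
with finite weighted sup-norm. -/
def MemCneg {E : Type*} [NormedAddCommGroup E] (β : ℝ) (φ : ℝ → E) : Prop :=
  ContinuousOn φ (Set.Iic 0) ∧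
    BddAbove (Set.range fun t : Set.Iic (0 : ℝ) => Real.exp (-β * t.1) * ‖φ t.1‖)

/-- Weighted sup-norm `sup_{t ≥ 0} e^{-β t} ‖φ t‖` on `[0,∞)`. -/
def posNorm {E : Type*} [NormedAddCommGroup E] (β : ℝ) (φ : ℝ → E) : ℝ :=
  ⨆ t : Set.Ici (0 : ℝ), Real.exp (-β * t.1) * ‖φ t.1‖

/-- Membership in the Banach space `C_β^+(E)` of continuous functions on `[0,∞)`
with finite weighted sup-norm. -/
def MemCpos {E : Type*} [NormedAddCommGroup E] (β : ℝ) (φ : ℝ → E) : Prop :=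
  ContinuousOn φ (Set.Ici 0) ∧
    BddAbove (Set.range fun t : Set.Ici (0 : ℝ) => Real.exp (-β * t.1) * ‖φ t.1‖)

variable {E₁ E₂ : Type*}
  [NormedAddCommGroup E₁] [NormedSpace ℝ E₁]
  [NormedAddCommGroup E₂] [NormedSpace ℝ E₂]

/-- Slow component of the Lyapunov–Perron operator `I^ε_{x₀}`. -/
def LPslow (S : E₁ →L[ℝ] E₁) (g1 : ℝ → E₁ → E₂ → E₁) (x0 : E₁)
    (x : ℝ → E₁) (y : ℝ → E₂) (t : ℝ) : E₁ :=
  NormedSpace.exp (t • S) x0 +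
    ∫ s in (0:ℝ)..t, NormedSpace.exp ((t - s) • S) (g1 s (x s) (y s))

/-- Fast component of the Lyapunov–Perron operator `I^ε_{x₀}`. -/
def LPfast (F : E₂ →L[ℝ] E₂) (g2 : ℝ → E₁ → E₂ → E₂) (ε : ℝ)
    (x : ℝ → E₁) (y : ℝ → E₂) (t : ℝ) : E₂ :=
  (1/ε) • ∫ s in Set.Iic t, NormedSpace.exp (((t - s)/ε) • F) (g2 s (x s) (y s))

/-!
The fast component is recovered from the variation-of-constants identity by letting the initial
time `u` tend to `-∞`. Along the trajectory the nonlinearity grows at most like `e^{(γ/ε)|r|}`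
(Lipschitz bound plus the weighted bounds on `x̂, ŷ`), while `exp (((τ - r)/ε) • F)` decays like
`e^{γ_f (τ - r)/ε}`; the gap `γ + γ_f < -K < 0` makes the product integrable on `(-∞, τ]` and
sends the boundary term `exp (((τ - u)/ε) • F) (ŷ u)` to zero. The slow component needs no
estimate: `exp (t • S)` is invertible, so its variation-of-constants identity can be run backward
from `s` to `t + s`. Membership of the shifts in `C_β^-` only uses that the weighted norm on
`(-∞, s]` is bounded, by the hypothesis on `(-∞, 0]` and by compactness on `[0, s]`.
-/

open Set Topology

section Exponential

variable {E : Type*} [NormedAddCommGroup E] [NormedSpace ℝ E] [CompleteSpace E]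

theorem exp_add_smul_apply (A : E →L[ℝ] E) (a b : ℝ) (x : E) :
    NormedSpace.exp ((a + b) • A) x = NormedSpace.exp (a • A) (NormedSpace.exp (b • A) x) := by
  let : NormedAlgebra ℚ (E →L[ℝ] E) := NormedAlgebra.restrictScalars ℚ ℝ _
  rw [add_smul, NormedSpace.exp_add_of_commute (((Commute.refl A).smul_left a).smul_right b),
    mul_apply_eq_comp]

theorem continuous_exp_smul (A : E →L[ℝ] E) : Continuous fun t : ℝ => NormedSpace.exp (t • A) := by
  let : NormedAlgebra ℚ (E →L[ℝ] E) := NormedAlgebra.restrictScalars ℚ ℝ _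
  fun_prop

theorem exp_neg_smul_apply_exp_smul_apply (A : E →L[ℝ] E) (t : ℝ) (x : E) :
    NormedSpace.exp ((-t) • A) (NormedSpace.exp (t • A) x) = x := by
  rw [← exp_add_smul_apply, neg_add_cancel, zero_smul, NormedSpace.exp_zero,
    one_apply_eq_self]

def expSmulEquiv (A : E →L[ℝ] E) (t : ℝ) : E ≃L[ℝ] E :=
  ContinuousLinearEquiv.equivOfInverse (NormedSpace.exp (t • A)) (NormedSpace.exp ((-t) • A))
    (exp_neg_smul_apply_exp_smul_apply A t)
    (fun x => by simpa using exp_neg_smul_apply_exp_smul_apply A (-t) x)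

theorem expSmulEquiv_apply (A : E →L[ℝ] E) (t : ℝ) (x : E) :
    expSmulEquiv A t x = NormedSpace.exp (t • A) x :=
  rfl

end Exponential

theorem ContinuousLinearEquiv.intervalIntegral_comp_comm {E E' : Type*}
    [NormedAddCommGroup E] [NormedSpace ℝ E] [NormedAddCommGroup E'] [NormedSpace ℝ E']
    (L : E ≃L[ℝ] E') (f : ℝ → E) (a b : ℝ) :
    ∫ x in a..b, L (f x) = L (∫ x in a..b, f x) := by
  simp only [intervalIntegral, L.integral_comp_comm, map_sub]

/-- No integrability of `f` is needed: the automorphism `exp ((a - b) • A)` commutes with every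
integral. -/
theorem variationOfConstants_symm {E : Type*} [NormedAddCommGroup E] [NormedSpace ℝ E]
    [CompleteSpace E] (A : E →L[ℝ] E) (f : ℝ → E) {a b : ℝ} {xa xb : E}
    (h : xb = NormedSpace.exp ((b - a) • A) xa + ∫ r in a..b, NormedSpace.exp ((b - r) • A) (f r)) :
    xa = NormedSpace.exp ((a - b) • A) xb + ∫ r in b..a, NormedSpace.exp ((a - r) • A) (f r) := by
  have hcomm := (expSmulEquiv A (a - b)).intervalIntegral_comp_comm
    (fun r => NormedSpace.exp ((b - r) • A) (f r)) a b
  simp only [expSmulEquiv_apply, ← exp_add_smul_apply, sub_add_sub_cancel] at hcomm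
  rw [h, map_add, ← exp_add_smul_apply, sub_add_sub_cancel, sub_self, zero_smul,
    NormedSpace.exp_zero, one_apply_eq_self, ← hcomm, intervalIntegral.integral_symm a b]
  abel

section WeightedNorm

variable {E : Type*} [NormedAddCommGroup E]

def weightedNorm (β : ℝ) (φ : ℝ → E) (t : ℝ) : ℝ :=
  Real.exp (-β * t) * ‖φ t‖

theorem memCneg_iff {β : ℝ} {φ : ℝ → E} :
    MemCneg β φ ↔ ContinuousOn φ (Iic 0) ∧ BddAbove (weightedNorm β φ '' Iic 0) := by
  rw [MemCneg, image_eq_range]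
  rfl

theorem norm_le_of_weightedNorm_le {β C t : ℝ} {φ : ℝ → E} (h : weightedNorm β φ t ≤ C) :
    ‖φ t‖ ≤ C * Real.exp (β * t) := by
  rw [weightedNorm, ← le_div_iff₀' (Real.exp_pos _), div_eq_mul_inv, ← Real.exp_neg] at h
  simpa only [neg_mul, neg_neg] using h

theorem weightedNorm_comp_add_right (β s t : ℝ) (φ : ℝ → E) :
    weightedNorm β (fun r => φ (r + s)) t = Real.exp (β * s) * weightedNorm β φ (t + s) := by
  simp only [weightedNorm, ← mul_assoc, ← Real.exp_add]
  ring_nf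

theorem bddAbove_weightedNorm_Icc {β a b M : ℝ} {φ : ℝ → E} (h : ∀ t ∈ Icc a b, ‖φ t‖ ≤ M) :
    BddAbove (weightedNorm β φ '' Icc a b) := by
  obtain ⟨W, hW⟩ := isCompact_Icc.exists_bound_of_continuousOn
    (by fun_prop : Continuous fun t => Real.exp (-β * t)).continuousOn
  refine ⟨W * M, forall_mem_image.2 fun t ht => ?_⟩
  have hw := hW t ht
  rw [Real.norm_eq_abs, abs_of_pos (Real.exp_pos _)] at hw
  exact mul_le_mul hw (h t ht) (norm_nonneg _) ((Real.exp_pos _).le.trans hw)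

theorem BddAbove.weightedNorm_Iic {β a b M : ℝ} {φ : ℝ → E}
    (ha : BddAbove (weightedNorm β φ '' Iic a)) (h : ∀ t ∈ Icc a b, ‖φ t‖ ≤ M) :
    BddAbove (weightedNorm β φ '' Iic b) :=
  (ha.union (bddAbove_weightedNorm_Icc h)).mono
    (image_union _ _ _ ▸ image_mono Iic_subset_Iic_union_Icc)

theorem BddAbove.weightedNorm_Iic_of_continuousOn {β a b : ℝ} {φ : ℝ → E}
    (ha : BddAbove (weightedNorm β φ '' Iic a)) (hc : ContinuousOn φ (Icc a b)) :
    BddAbove (weightedNorm β φ '' Iic b) :=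
  let ⟨_, hM⟩ := isCompact_Icc.exists_bound_of_continuousOn hc
  ha.weightedNorm_Iic hM

theorem MemCneg.bddAbove_weightedNorm_Iic {β b : ℝ} {φ : ℝ → E} (h : MemCneg β φ)
    (hc : ContinuousOn φ (Icc 0 b)) : BddAbove (weightedNorm β φ '' Iic b) :=
  (memCneg_iff.1 h).2.weightedNorm_Iic_of_continuousOn hc

theorem memCneg_comp_add_right {β s : ℝ} {φ : ℝ → E} (hc : ContinuousOn φ (Iic s))
    (hb : BddAbove (weightedNorm β φ '' Iic s)) : MemCneg β fun t => φ (t + s) := by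
  obtain ⟨C, hC⟩ := hb
  refine memCneg_iff.2 ⟨hc.comp (by fun_prop) fun t ht => ?_, ⟨Real.exp (β * s) * C, ?_⟩⟩
  · simpa using (ht : t ≤ 0)
  · rintro _ ⟨t, ht, rfl⟩
    rw [weightedNorm_comp_add_right]
    exact mul_le_mul_of_nonneg_left (hC ⟨t + s, by simpa using (ht : t ≤ 0), rfl⟩)
      (Real.exp_pos _).le

end WeightedNorm

section Nonlinearity

variable {E₁ E₂ E : Type*} [NormedAddCommGroup E₁] [NormedAddCommGroup E₂] [NormedAddCommGroup E]

theorem continuous_uncurry_of_norm_sub_le {f : E₁ → E₂ → E} {K : ℝ}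
    (hf : ∀ x₁ y₁ x₂ y₂, ‖f x₁ y₁ - f x₂ y₂‖ ≤ K * (‖x₁ - x₂‖ + ‖y₁ - y₂‖)) :
    Continuous (Function.uncurry f) := by
  refine continuous_iff_continuousAt.2 fun p => tendsto_iff_norm_sub_tendsto_zero.2 ?_
  have hbound : Tendsto (fun q : E₁ × E₂ => K * (‖q.1 - p.1‖ + ‖q.2 - p.2‖)) (𝓝 p) (𝓝 0) := by
    simpa using ((by fun_prop : Continuous fun q : E₁ × E₂ =>
      K * (‖q.1 - p.1‖ + ‖q.2 - p.2‖)).tendsto p)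
  exact squeeze_zero (fun _ => norm_nonneg _) (fun q => hf _ _ _ _) hbound

theorem aemeasurable_comp_of_caratheodory
    [MeasurableSpace E₁] [BorelSpace E₁] [SecondCountableTopology E₁]
    [MeasurableSpace E₂] [BorelSpace E₂] [SecondCountableTopology E₂]
    [MeasurableSpace E] [BorelSpace E] {μ : Measure ℝ}
    {g : ℝ → E₁ → E₂ → E} (hm : ∀ x y, Measurable fun t => g t x y)
    (hc : ∀ t, Continuous (Function.uncurry (g t))) {x : ℝ → E₁} {y : ℝ → E₂}
    (hx : AEMeasurable x μ) (hy : AEMeasurable y μ) :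
    AEMeasurable (fun t => g t (x t) (y t)) μ :=
  (measurable_uncurry_of_continuous_of_measurable
    (u := fun (p : E₁ × E₂) (t : ℝ) => g t p.1 p.2) hc
    (fun p => hm p.1 p.2)).comp_aemeasurable ((hx.prodMk hy).prodMk aemeasurable_id)

theorem BddAbove.weightedNorm_comp {β K : ℝ} (hK : 0 ≤ K) {A : Set ℝ}
    {g : ℝ → E₁ → E₂ → E}
    (hg : ∀ t x₁ y₁ x₂ y₂, ‖g t x₁ y₁ - g t x₂ y₂‖ ≤ K * (‖x₁ - x₂‖ + ‖y₁ - y₂‖))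
    {x : ℝ → E₁} {y : ℝ → E₂} (hg0 : BddAbove (weightedNorm β (fun t => g t 0 0) '' A))
    (hx : BddAbove (weightedNorm β x '' A)) (hy : BddAbove (weightedNorm β y '' A)) :
    BddAbove (weightedNorm β (fun t => g t (x t) (y t)) '' A) := by
  obtain ⟨C₀, hC₀⟩ := hg0
  obtain ⟨Cx, hCx⟩ := hx
  obtain ⟨Cy, hCy⟩ := hy
  refine ⟨C₀ + K * (Cx + Cy), forall_mem_image.2 fun t ht => ?_⟩
  have hpoint : ‖g t (x t) (y t)‖ ≤ ‖g t 0 0‖ + K * (‖x t‖ + ‖y t‖) := by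
    have hlip := hg t (x t) (y t) 0 0
    rw [sub_zero, sub_zero] at hlip
    linarith [norm_le_norm_add_norm_sub' (g t (x t) (y t)) (g t 0 0)]
  calc weightedNorm β (fun t => g t (x t) (y t)) t
      ≤ weightedNorm β (fun t => g t 0 0) t + K * (weightedNorm β x t + weightedNorm β y t) := by
        simp only [weightedNorm]
        nlinarith [mul_le_mul_of_nonneg_left hpoint (Real.exp_pos (-β * t)).le]
    _ ≤ C₀ + K * (Cx + Cy) := by
        gcongr
        exacts [hC₀ (mem_image_of_mem _ ht), hCx (mem_image_of_mem _ ht),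
          hCy (mem_image_of_mem _ ht)]

end Nonlinearity

theorem integrableOn_Iic_of_norm_le_mul_exp {E : Type*} [NormedAddCommGroup E] {f : ℝ → E}
    {s C c : ℝ} (hc : 0 < c) (hf : AEStronglyMeasurable f (volume.restrict (Iic s)))
    (h : ∀ t ≤ s, ‖f t‖ ≤ C * Real.exp (c * t)) : IntegrableOn f (Iic s) :=
  Integrable.mono' ((integrableOn_exp_mul_Iic hc s).const_mul C) hf
    ((ae_restrict_mem measurableSet_Iic).mono fun t ht => h t ht)

section FastComponent

variable {E : Type*} [NormedAddCommGroup E] [NormedSpace ℝ E]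

theorem eq_smul_integral_Iic_of_forall_eq_add_smul_intervalIntegral [CompleteSpace E]
    {f a : ℝ → E} {y : E} {c τ : ℝ} (hf : IntegrableOn f (Iic τ)) (ha : Tendsto a atBot (𝓝 0))
    (h : ∀ u ≤ τ, y = a u + c • ∫ r in u..τ, f r) : y = c • ∫ r in Iic τ, f r := by
  have hlim : Tendsto (fun u => c • ∫ r in u..τ, f r) atBot (𝓝 (c • ∫ r in Iic τ, f r)) :=
    (intervalIntegral_tendsto_integral_Iic τ hf tendsto_id).const_smul c
  have hrest : Tendsto (fun u => y - a u) atBot (𝓝 y) := by simpa using ha.const_sub y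
  refine tendsto_nhds_unique (hrest.congr' ?_) hlim
  filter_upwards [eventually_le_atBot τ] with u hu
  exact (eq_sub_of_add_eq' (h u hu).symm).symm

variable {F : E →L[ℝ] E} {ω ε β : ℝ}

theorem norm_exp_smul_apply_le_of_weightedNorm_le
    (hF : ∀ t ≥ (0:ℝ), ∀ y : E, ‖NormedSpace.exp (t • F) y‖ ≤ Real.exp (ω * t) * ‖y‖)
    (hε : 0 < ε) {φ : ℝ → E} {C r τ : ℝ} (hr : r ≤ τ) (hC : weightedNorm β φ r ≤ C) :
    ‖NormedSpace.exp (((τ - r) / ε) • F) (φ r)‖ ≤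
      C * Real.exp (ω / ε * τ) * Real.exp ((β - ω / ε) * r) :=
  calc ‖NormedSpace.exp (((τ - r) / ε) • F) (φ r)‖
      ≤ Real.exp (ω * ((τ - r) / ε)) * ‖φ r‖ := hF _ (div_nonneg (sub_nonneg.2 hr) hε.le) _
    _ ≤ Real.exp (ω * ((τ - r) / ε)) * (C * Real.exp (β * r)) := by
        gcongr
        exact norm_le_of_weightedNorm_le hC
    _ = C * Real.exp (ω / ε * τ) * Real.exp ((β - ω / ε) * r) := by
        rw [mul_assoc, ← Real.exp_add, mul_left_comm, ← Real.exp_add]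
        ring_nf

theorem integrableOn_exp_smul_apply_Iic [CompleteSpace E]
    (hF : ∀ t ≥ (0:ℝ), ∀ y : E, ‖NormedSpace.exp (t • F) y‖ ≤ Real.exp (ω * t) * ‖y‖)
    (hε : 0 < ε) (hc : 0 < β - ω / ε) {φ : ℝ → E} {τ : ℝ}
    (hm : AEStronglyMeasurable φ (volume.restrict (Iic τ)))
    (hb : BddAbove (weightedNorm β φ '' Iic τ)) :
    IntegrableOn (fun r => NormedSpace.exp (((τ - r) / ε) • F) (φ r)) (Iic τ) := by
  obtain ⟨C, hC⟩ := hb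
  have hexp : Continuous fun r : ℝ => NormedSpace.exp (((τ - r) / ε) • F) :=
    (continuous_exp_smul F).comp (by fun_prop)
  refine integrableOn_Iic_of_norm_le_mul_exp hc
    ((ContinuousLinearMap.id ℝ _).aestronglyMeasurable_comp₂ hexp.aestronglyMeasurable hm)
    fun r hr => norm_exp_smul_apply_le_of_weightedNorm_le hF hε hr (hC (mem_image_of_mem _ hr))

theorem tendsto_exp_smul_apply_atBot
    (hF : ∀ t ≥ (0:ℝ), ∀ y : E, ‖NormedSpace.exp (t • F) y‖ ≤ Real.exp (ω * t) * ‖y‖)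
    (hε : 0 < ε) (hc : 0 < β - ω / ε) {φ : ℝ → E} {a : ℝ}
    (hb : BddAbove (weightedNorm β φ '' Iic a)) (τ : ℝ) :
    Tendsto (fun u => NormedSpace.exp (((τ - u) / ε) • F) (φ u)) atBot (𝓝 0) := by
  obtain ⟨C, hC⟩ := hb
  have hdecay : Tendsto (fun u => C * Real.exp (ω / ε * τ) * Real.exp ((β - ω / ε) * u))
      atBot (𝓝 0) := by
    simpa using (Real.tendsto_exp_atBot.comp (tendsto_id.const_mul_atBot hc)).const_mul
      (C * Real.exp (ω / ε * τ))
  refine squeeze_zero_norm' ?_ hdecay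
  filter_upwards [eventually_le_atBot (min a τ)] with u hu
  exact norm_exp_smul_apply_le_of_weightedNorm_le hF hε (hu.trans (min_le_right _ _))
    (hC (mem_image_of_mem _ (hu.trans (min_le_left _ _))))

end FastComponent

theorem setIntegral_Iic_comp_add_right {E : Type*} [NormedAddCommGroup E] [NormedSpace ℝ E]
    (f : ℝ → E) (a s : ℝ) : ∫ r in Iic a, f (r + s) = ∫ r in Iic (a + s), f r := by
  have h := (measurePreserving_add_right volume s).setIntegral_preimage_emb
    (measurableEmbedding_addRight s) f (Iic (a + s))
  rwa [preimage_add_const_Iic, add_sub_cancel_right] at h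

theorem eq_LPslow_comp_add_right {E E' : Type*} [NormedAddCommGroup E] [NormedSpace ℝ E]
    [CompleteSpace E] (S : E →L[ℝ] E) (g : ℝ → E → E' → E) {x : ℝ → E} {y : ℝ → E'} {s t : ℝ}
    (h : x s = NormedSpace.exp ((s - (t + s)) • S) (x (t + s)) +
      ∫ r in (t + s)..s, NormedSpace.exp ((s - r) • S) (g r (x r) (y r))) :
    x (t + s) = LPslow S (fun r x y => g (r + s) x y) (x s)
      (fun r => x (r + s)) (fun r => y (r + s)) t := by
  have hshift := intervalIntegral.integral_comp_add_right
    (fun r => NormedSpace.exp ((t + s - r) • S) (g r (x r) (y r))) s (a := 0) (b := t)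
  simp only [add_sub_add_right_eq_sub, zero_add] at hshift
  simp only [LPslow]
  rw [variationOfConstants_symm S _ h, hshift, add_sub_cancel_right]

theorem eq_LPfast_comp_add_right {E E' : Type*} [NormedAddCommGroup E] [NormedSpace ℝ E]
    (F : E →L[ℝ] E) (g : ℝ → E' → E → E) {x : ℝ → E'} {y : ℝ → E} {ε s t : ℝ}
    (h : y (t + s) = (1 / ε) • ∫ r in Iic (t + s),
      NormedSpace.exp (((t + s - r) / ε) • F) (g r (x r) (y r))) :
    y (t + s) = LPfast F (fun r x y => g (r + s) x y) ε
      (fun r => x (r + s)) (fun r => y (r + s)) t := by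
  have hshift := setIntegral_Iic_comp_add_right
    (fun r => NormedSpace.exp (((t + s - r) / ε) • F) (g r (x r) (y r))) t s
  simp only [add_sub_add_right_eq_sub] at hshift
  simp only [LPfast]
  rw [h, hshift]

theorem slowManifold_positively_invariant_general
    {E₁ E₂ : Type*}
    [NormedAddCommGroup E₁] [NormedSpace ℝ E₁] [FiniteDimensional ℝ E₁] [MeasurableSpace E₁] [BorelSpace E₁]
    [NormedAddCommGroup E₂] [NormedSpace ℝ E₂] [FiniteDimensional ℝ E₂] [MeasurableSpace E₂] [BorelSpace E₂]
    (S : E₁ →L[ℝ] E₁) (F : E₂ →L[ℝ] E₂)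
    (γf γ K ε : ℝ)
    (hK : 0 < K)
    (hgap : K < -(γ + γf)) (hε : 0 < ε)
    (hF : ∀ t ≥ (0:ℝ), ∀ y : E₂, ‖NormedSpace.exp (t • F) y‖ ≤ Real.exp (γf * t) * ‖y‖)
    (g1 : ℝ → E₁ → E₂ → E₁) (g2 : ℝ → E₁ → E₂ → E₂)
    (hg2m : ∀ x y, Measurable fun t => g2 t x y)
    (hg2b : ∀ x y r, ∃ M, ∀ t : ℝ, |t| ≤ r → ‖g2 t x y‖ ≤ M)
    (hg2l : ∀ t x₁ y₁ x₂ y₂, ‖g2 t x₁ y₁ - g2 t x₂ y₂‖ ≤ K * (‖x₁ - x₂‖ + ‖y₁ - y₂‖))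
    (hg0 : ∃ M, ∀ t ≤ (0:ℝ),
      Real.exp ((γ/ε) * t) * (‖g1 t 0 0‖ + ‖g2 t 0 0‖) ≤ M)
    (T : ℝ)
    (xh : ℝ → E₁) (yh : ℝ → E₂)
    (hcx : ContinuousOn xh (Set.Iic T)) (hcy : ContinuousOn yh (Set.Iic T))
    (hvoc : ∀ u t : ℝ, u ≤ t → t ≤ T →
      xh t = NormedSpace.exp ((t - u) • S) (xh u) +
          ∫ s in u..t, NormedSpace.exp ((t - s) • S) (g1 s (xh s) (yh s)) ∧
      yh t = NormedSpace.exp (((t - u)/ε) • F) (yh u) +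
          (1/ε) • ∫ s in u..t, NormedSpace.exp (((t - s)/ε) • F) (g2 s (xh s) (yh s)))
    (hmem : MemCneg (-γ/ε) xh ∧ MemCneg (-γ/ε) yh) :
    ∀ s : ℝ, 0 ≤ s → s ≤ T →
      MemCneg (-γ/ε) (fun t => xh (t + s)) ∧
      MemCneg (-γ/ε) (fun t => yh (t + s)) ∧
      IntegrableOn (fun r => NormedSpace.exp (((s - r)/ε) • F) (g2 r (xh r) (yh r)))
        (Set.Iic s) ∧
      yh s = (1/ε) • ∫ r in Set.Iic s,
        NormedSpace.exp (((s - r)/ε) • F) (g2 r (xh r) (yh r)) ∧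
      (∀ t ≤ (0:ℝ),
        xh (t + s) = LPslow S (fun r x y => g1 (r + s) x y) (xh s)
            (fun r => xh (r + s)) (fun r => yh (r + s)) t ∧
        yh (t + s) = LPfast F (fun r x y => g2 (r + s) x y) ε
            (fun r => xh (r + s)) (fun r => yh (r + s)) t) := by
  intro s _ hsT
  have hrate : 0 < -γ / ε - γf / ε := by rw [← sub_div]; exact div_pos (by linarith) hε
  have hxb : ∀ τ ≤ T, BddAbove (weightedNorm (-γ / ε) xh '' Iic τ) := fun τ hτ =>
    hmem.1.bddAbove_weightedNorm_Iic (hcx.mono fun r hr => hr.2.trans hτ)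
  have hyb : ∀ τ ≤ T, BddAbove (weightedNorm (-γ / ε) yh '' Iic τ) := fun τ hτ =>
    hmem.2.bddAbove_weightedNorm_Iic (hcy.mono fun r hr => hr.2.trans hτ)
  obtain ⟨M₀, hM₀⟩ := hg0
  have hgb : ∀ τ, BddAbove (weightedNorm (-γ / ε) (fun t => g2 t 0 0) '' Iic τ) := by
    intro τ
    obtain ⟨M, hM⟩ := hg2b 0 0 τ
    refine BddAbove.weightedNorm_Iic ⟨M₀, forall_mem_image.2 fun t ht => ?_⟩
      fun t ht => hM t ((abs_of_nonneg ht.1).le.trans ht.2)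
    simp only [weightedNorm, neg_div, neg_neg]
    exact (mul_le_mul_of_nonneg_left (le_add_of_nonneg_left (norm_nonneg _))
      (Real.exp_pos _).le).trans (hM₀ t ht)
  have hint : ∀ τ ≤ T, IntegrableOn
      (fun r => NormedSpace.exp (((τ - r) / ε) • F) (g2 r (xh r) (yh r))) (Iic τ) :=
    fun τ hτ => integrableOn_exp_smul_apply_Iic hF hε hrate
      (aemeasurable_comp_of_caratheodory hg2m (fun t => continuous_uncurry_of_norm_sub_le (hg2l t))
        ((hcx.mono (Iic_subset_Iic.2 hτ)).aemeasurable measurableSet_Iic)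
        ((hcy.mono (Iic_subset_Iic.2 hτ)).aemeasurable measurableSet_Iic)).aestronglyMeasurable
      (BddAbove.weightedNorm_comp hK.le hg2l (hgb τ) (hxb τ hτ) (hyb τ hτ))
  have hrep : ∀ τ ≤ T, yh τ = (1 / ε) • ∫ r in Iic τ,
      NormedSpace.exp (((τ - r) / ε) • F) (g2 r (xh r) (yh r)) :=
    fun τ hτ => eq_smul_integral_Iic_of_forall_eq_add_smul_intervalIntegral (hint τ hτ)
      (tendsto_exp_smul_apply_atBot hF hε hrate (memCneg_iff.1 hmem.2).2 τ)
      fun u hu => (hvoc u τ hu hτ).2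
  refine ⟨memCneg_comp_add_right (hcx.mono (Iic_subset_Iic.2 hsT)) (hxb s hsT),
    memCneg_comp_add_right (hcy.mono (Iic_subset_Iic.2 hsT)) (hyb s hsT),
    hint s hsT, hrep s hsT, fun t ht => ⟨?_, ?_⟩⟩
  · exact eq_LPslow_comp_add_right S g1 (hvoc (t + s) s (by linarith) hsT).1
  · exact eq_LPfast_comp_add_right F g2 (hrep (t + s) (by linarith))

/-- Positive invariance of the slow manifold, pathwise: the time-shift of
a `C_β^-` solution of the variation-of-constants identities on `(-∞,T]` is again in `C_β^-`
and solves the Lyapunov–Perron integral equation for the shifted nonlinearities. -/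
theorem slowManifold_positively_invariant
    {E₁ E₂ : Type*}
    [NormedAddCommGroup E₁] [NormedSpace ℝ E₁] [FiniteDimensional ℝ E₁] [MeasurableSpace E₁] [BorelSpace E₁]
    [NormedAddCommGroup E₂] [NormedSpace ℝ E₂] [FiniteDimensional ℝ E₂] [MeasurableSpace E₂] [BorelSpace E₂]
    (S : E₁ →L[ℝ] E₁) (F : E₂ →L[ℝ] E₂)
    (γs γf γ K ε : ℝ)
    (hγs : 0 < γs) (hγf : γf < 0) (hγ : 0 < γ) (hK : 0 < K)
    (hgap : K < -(γ + γf)) (hε : 0 < ε)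
    (hS : ∀ t ≤ (0:ℝ), ∀ x : E₁, ‖NormedSpace.exp (t • S) x‖ ≤ Real.exp (γs * t) * ‖x‖)
    (hF : ∀ t ≥ (0:ℝ), ∀ y : E₂, ‖NormedSpace.exp (t • F) y‖ ≤ Real.exp (γf * t) * ‖y‖)
    (g1 : ℝ → E₁ → E₂ → E₁) (g2 : ℝ → E₁ → E₂ → E₂)
    (hg1m : ∀ x y, Measurable fun t => g1 t x y)
    (hg2m : ∀ x y, Measurable fun t => g2 t x y)
    (hg1b : ∀ x y r, ∃ M, ∀ t : ℝ, |t| ≤ r → ‖g1 t x y‖ ≤ M)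
    (hg2b : ∀ x y r, ∃ M, ∀ t : ℝ, |t| ≤ r → ‖g2 t x y‖ ≤ M)
    (hg1l : ∀ t x₁ y₁ x₂ y₂, ‖g1 t x₁ y₁ - g1 t x₂ y₂‖ ≤ K * (‖x₁ - x₂‖ + ‖y₁ - y₂‖))
    (hg2l : ∀ t x₁ y₁ x₂ y₂, ‖g2 t x₁ y₁ - g2 t x₂ y₂‖ ≤ K * (‖x₁ - x₂‖ + ‖y₁ - y₂‖))
    (hg0 : ∃ M, ∀ t ≤ (0:ℝ),
      Real.exp ((γ/ε) * t) * (‖g1 t 0 0‖ + ‖g2 t 0 0‖) ≤ M)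
    (T : ℝ) (hT : 0 ≤ T)
    (xh : ℝ → E₁) (yh : ℝ → E₂)
    (hcx : ContinuousOn xh (Set.Iic T)) (hcy : ContinuousOn yh (Set.Iic T))
    (hvoc : ∀ u t : ℝ, u ≤ t → t ≤ T →
      xh t = NormedSpace.exp ((t - u) • S) (xh u) +
          ∫ s in u..t, NormedSpace.exp ((t - s) • S) (g1 s (xh s) (yh s)) ∧
      yh t = NormedSpace.exp (((t - u)/ε) • F) (yh u) +
          (1/ε) • ∫ s in u..t, NormedSpace.exp (((t - s)/ε) • F) (g2 s (xh s) (yh s)))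
    (hmem : MemCneg (-γ/ε) xh ∧ MemCneg (-γ/ε) yh) :
    ∀ s : ℝ, 0 ≤ s → s ≤ T →
      MemCneg (-γ/ε) (fun t => xh (t + s)) ∧
      MemCneg (-γ/ε) (fun t => yh (t + s)) ∧
      IntegrableOn (fun r => NormedSpace.exp (((s - r)/ε) • F) (g2 r (xh r) (yh r)))
        (Set.Iic s) ∧
      yh s = (1/ε) • ∫ r in Set.Iic s,
        NormedSpace.exp (((s - r)/ε) • F) (g2 r (xh r) (yh r)) ∧
      (∀ t ≤ (0:ℝ),
        xh (t + s) = LPslow S (fun r x y => g1 (r + s) x y) (xh s)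
            (fun r => xh (r + s)) (fun r => yh (r + s)) t ∧
        yh (t + s) = LPfast F (fun r x y => g2 (r + s) x y) ε
            (fun r => xh (r + s)) (fun r => yh (r + s)) t) :=
  slowManifold_positively_invariant_general S F γf γ K ε hK hgap hε hF g1 g2 hg2m hg2b hg2l hg0 T xh
    yh hcx hcy hvoc hmem
end
end

section
/- Assume ρ(ε) < 1. Let Δĝ₁ : ℝ × E₁ × E₂ → E₁ and Δĝ₂ : ℝ × E₁ × E₂ → E₂ be functions with t ↦ Δĝᵢ(t,u,v) measurable for each (u,v), ‖Δĝᵢ(t,u₁,v₁) − Δĝᵢ(t,u₂,v₂)‖ ≤ K(‖u₁−u₂‖+‖v₁−v₂‖) for all t, and Δĝᵢ(t,0,0) = 0 for all t. Let h : E₁ → E₂ be Lipschitz with constant at most L_h := (−K/(γ+γ_f))·(1/(1−ρ(ε))), let (x₀, y₀) ∈ E₁ × E₂, and define the operator J^ε on C_β^+(E₁ × E₂) by J^ε(u,v)[t] := ( −∫_t^{+∞} exp((t−s)S) Δĝ₁(s, u(s), v(s)) ds , exp((t/ε)F)·v₀(u,v) + (1/ε)∫₀^t exp(((t−s)/ε)F)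 Δĝ₂(s, u(s), v(s)) ds ), where v₀(u,v) := −y₀ + h( x₀ − ∫_0^{+∞} exp(−sS) Δĝ₁(s, u(s), v(s)) ds ). Then for all ψ, ψ̄ ∈ C_β^+(E₁ × E₂), ‖J^ε(ψ) − J^ε(ψ̄)‖_{C_β^+} ≤ ρ̄(ε)·‖ψ − ψ̄‖_{C_β^+}, where ρ̄(ε) := ρ(ε) − εK²/((γ+εγ_s)(γ+γ_f)(1−ρ(ε))). -/
open MeasureTheory Real Filter

noncomputable section

variable {E₁ E₂ : Type*}
  [NormedAddCommGroup E₁] [NormedSpace ℝ E₁]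
  [NormedAddCommGroup E₂] [NormedSpace ℝ E₂]

/-- Slow component of the Lyapunov–Perron operator `J^ε` for the tracking problem. -/
def Jslow (S : E₁ →L[ℝ] E₁) (Δg1 : ℝ → E₁ → E₂ → E₁)
    (u : ℝ → E₁) (v : ℝ → E₂) (t : ℝ) : E₁ :=
  -∫ s in Set.Ici t, NormedSpace.exp ((t - s) • S) (Δg1 s (u s) (v s))

/-- The initial fast value `v₀(u,v)` in the tracking operator `J^ε`. -/
def Vzero (S : E₁ →L[ℝ] E₁) (Δg1 : ℝ → E₁ → E₂ → E₁) (h : E₁ → E₂)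
    (x0 : E₁) (y0 : E₂) (u : ℝ → E₁) (v : ℝ → E₂) : E₂ :=
  -y0 + h (x0 - ∫ s in Set.Ici (0:ℝ), NormedSpace.exp ((-s) • S) (Δg1 s (u s) (v s)))

/-- Fast component of the Lyapunov–Perron operator `J^ε` for the tracking problem. -/
def Jfast (S : E₁ →L[ℝ] E₁) (F : E₂ →L[ℝ] E₂)
    (Δg1 : ℝ → E₁ → E₂ → E₁) (Δg2 : ℝ → E₁ → E₂ → E₂) (h : E₁ → E₂)
    (x0 : E₁) (y0 : E₂) (ε : ℝ) (u : ℝ → E₁) (v : ℝ → E₂) (t : ℝ) : E₂ :=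
  NormedSpace.exp ((t/ε) • F) (Vzero S Δg1 h x0 y0 u v) +
    (1/ε) • ∫ s in (0:ℝ)..t, NormedSpace.exp (((t - s)/ε) • F) (Δg2 s (u s) (v s))


/-!
Both components of `J^ε ψ - J^ε ψ̄` are integrals of a linear flow applied to
`Δĝ(ψ) - Δĝ(ψ̄)`, whose norm at time `s` is at most `K ‖ψ - ψ̄‖ e^{βs}`. The slow flow grows at
most like `e^{γ_s τ}` backwards in time, so its tail integral gains the factor
`1 / (γ_s - β) = ε / (γ + ε γ_s)`; the fast flow decays like `e^{γ_f τ / ε}`, so the convolution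
scaled by `1/ε` gains `1 / (ε β - γ_f) = -1 / (γ + γ_f)`. The fast initial value `v₀` is `h`
evaluated at the slow component at time `0` (shifted by `x₀`), which contributes
`L_h ε K / (γ + ε γ_s)`, and the three rates add up to `ρ̄(ε)`.
-/

open Set

section WeightedNorm

variable {E : Type*} [NormedAddCommGroup E] {β : ℝ} {φ ψ : ℝ → E}

theorem MemCpos.sub (hφ : MemCpos β φ) (hψ : MemCpos β ψ) : MemCpos β (fun t => φ t - ψ t) := by
  refine ⟨hφ.1.sub hψ.1, ?_⟩
  obtain ⟨Mφ, hMφ⟩ := hφ.2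
  obtain ⟨Mψ, hMψ⟩ := hψ.2
  refine ⟨Mφ + Mψ, ?_⟩
  rintro _ ⟨t, rfl⟩
  have hφt := hMφ (mem_range_self t)
  have hψt := hMψ (mem_range_self t)
  calc exp (-β * t.1) * ‖φ t.1 - ψ t.1‖ ≤ exp (-β * t.1) * (‖φ t.1‖ + ‖ψ t.1‖) :=
        mul_le_mul_of_nonneg_left (norm_sub_le _ _) (exp_pos _).le
    _ ≤ Mφ + Mψ := by rw [mul_add]; exact add_le_add hφt hψt

theorem posNorm_nonneg (β : ℝ) (φ : ℝ → E) : 0 ≤ posNorm β φ :=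
  Real.iSup_nonneg fun _ => by positivity

theorem MemCpos.norm_le (hφ : MemCpos β φ) {t : ℝ} (ht : 0 ≤ t) :
    ‖φ t‖ ≤ posNorm β φ * exp (β * t) := by
  have hweighted : exp (-β * t) * ‖φ t‖ ≤ posNorm β φ := le_ciSup hφ.2 (⟨t, ht⟩ : Ici (0 : ℝ))
  rw [← div_le_iff₀ (exp_pos _), div_eq_mul_inv, ← exp_neg, mul_comm]
  simpa only [neg_mul] using hweighted

theorem posNorm_le_of_norm_le {C : ℝ} (h : ∀ t, 0 ≤ t → ‖φ t‖ ≤ C * exp (β * t)) :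
    posNorm β φ ≤ C := by
  have : Nonempty (Ici (0 : ℝ)) := ⟨⟨0, self_mem_Ici⟩⟩
  refine ciSup_le fun ⟨t, ht⟩ => ?_
  rw [← le_div_iff₀' (exp_pos _), div_eq_mul_inv, ← exp_neg, neg_mul, neg_neg]
  exact h t ht

end WeightedNorm

section Caratheodory

variable {E₁ E₂ E₃ : Type*} [NormedAddCommGroup E₁] [NormedAddCommGroup E₂] [NormedAddCommGroup E₃]

theorem continuous_uncurry_of_norm_sub_le_s7 {f : E₁ → E₂ → E₃} {K : ℝ}
    (hf : ∀ u₁ v₁ u₂ v₂, ‖f u₁ v₁ - f u₂ v₂‖ ≤ K * (‖u₁ - u₂‖ + ‖v₁ - v₂‖)) :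
    Continuous (Function.uncurry f) := by
  refine continuous_iff_continuousAt.2 fun p => tendsto_iff_norm_sub_tendsto_zero.2 ?_
  refine squeeze_zero (fun _ => norm_nonneg _) (fun q => hf q.1 q.2 p.1 p.2) ?_
  have hcont : Continuous fun q : E₁ × E₂ => K * (‖q.1 - p.1‖ + ‖q.2 - p.2‖) := by fun_prop
  simpa using hcont.tendsto p

variable [MeasurableSpace E₁] [BorelSpace E₁] [SecondCountableTopology E₁]
  [MeasurableSpace E₂] [BorelSpace E₂] [SecondCountableTopology E₂]
  [MeasurableSpace E₃] [BorelSpace E₃] [SecondCountableTopology E₃]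

theorem aestronglyMeasurable_comp_of_measurable_of_continuous {α : Type*} [MeasurableSpace α]
    {μ : Measure α} {g : α → E₁ → E₂ → E₃} (hm : ∀ x y, Measurable fun t => g t x y)
    (hc : ∀ t, Continuous (Function.uncurry (g t))) {u : α → E₁} {v : α → E₂}
    (hu : AEMeasurable u μ) (hv : AEMeasurable v μ) :
    AEStronglyMeasurable (fun t => g t (u t) (v t)) μ := by
  have hg : Measurable (Function.uncurry fun (p : E₁ × E₂) t => g t p.1 p.2) :=
    measurable_uncurry_of_continuous_of_measurable (fun t => hc t) fun p => hm p.1 p.2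
  exact (hg.comp_aemeasurable ((hu.prodMk hv).prodMk aemeasurable_id)).aestronglyMeasurable

end Caratheodory

section Nonlinearity

variable {E₁ E₂ E₃ : Type*} [NormedAddCommGroup E₁] [NormedAddCommGroup E₂] [NormedAddCommGroup E₃]
  {g : ℝ → E₁ → E₂ → E₃} {K β : ℝ}

theorem norm_apply_sub_apply_le_of_memCpos (hK : 0 ≤ K)
    (hl : ∀ t u₁ v₁ u₂ v₂, ‖g t u₁ v₁ - g t u₂ v₂‖ ≤ K * (‖u₁ - u₂‖ + ‖v₁ - v₂‖))
    {u ub : ℝ → E₁} {v vb : ℝ → E₂} (hu : MemCpos β (fun t => u t - ub t))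
    (hv : MemCpos β (fun t => v t - vb t)) {s : ℝ} (hs : 0 ≤ s) :
    ‖g s (u s) (v s) - g s (ub s) (vb s)‖ ≤
      K * (posNorm β (fun t => u t - ub t) + posNorm β (fun t => v t - vb t)) * exp (β * s) :=
  calc ‖g s (u s) (v s) - g s (ub s) (vb s)‖ ≤ K * (‖u s - ub s‖ + ‖v s - vb s‖) := hl s _ _ _ _
    _ ≤ K * (posNorm β (fun t => u t - ub t) * exp (β * s) +
          posNorm β (fun t => v t - vb t) * exp (β * s)) := by
      gcongr
      exacts [hu.norm_le hs, hv.norm_le hs]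
    _ = _ := by ring

theorem norm_apply_le_of_memCpos (hK : 0 ≤ K)
    (hl : ∀ t u₁ v₁ u₂ v₂, ‖g t u₁ v₁ - g t u₂ v₂‖ ≤ K * (‖u₁ - u₂‖ + ‖v₁ - v₂‖))
    (h0 : ∀ t, g t 0 0 = 0) {u : ℝ → E₁} {v : ℝ → E₂} (hu : MemCpos β u) (hv : MemCpos β v)
    {s : ℝ} (hs : 0 ≤ s) :
    ‖g s (u s) (v s)‖ ≤ K * (posNorm β u + posNorm β v) * exp (β * s) :=
  calc ‖g s (u s) (v s)‖ ≤ K * (‖u s‖ + ‖v s‖) := by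
        simpa only [h0, sub_zero] using hl s (u s) (v s) 0 0
    _ ≤ K * (posNorm β u * exp (β * s) + posNorm β v * exp (β * s)) := by
      gcongr
      exacts [hu.norm_le hs, hv.norm_le hs]
    _ = _ := by ring

theorem MemCpos.aestronglyMeasurable_comp [MeasurableSpace E₁] [BorelSpace E₁]
    [SecondCountableTopology E₁] [MeasurableSpace E₂] [BorelSpace E₂] [SecondCountableTopology E₂]
    [MeasurableSpace E₃] [BorelSpace E₃] [SecondCountableTopology E₃]
    (hm : ∀ x y, Measurable fun t => g t x y)
    (hl : ∀ t u₁ v₁ u₂ v₂, ‖g t u₁ v₁ - g t u₂ v₂‖ ≤ K * (‖u₁ - u₂‖ + ‖v₁ - v₂‖))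
    {u : ℝ → E₁} {v : ℝ → E₂} (hu : MemCpos β u) (hv : MemCpos β v) :
    AEStronglyMeasurable (fun s => g s (u s) (v s)) (volume.restrict (Ici 0)) :=
  aestronglyMeasurable_comp_of_measurable_of_continuous hm
    (fun t => continuous_uncurry_of_norm_sub_le_s7 (hl t))
    (hu.1.aemeasurable measurableSet_Ici) (hv.1.aemeasurable measurableSet_Ici)

end Nonlinearity

section Convolution

variable {E : Type*} [NormedAddCommGroup E] [NormedSpace ℝ E] {T : ℝ → E →L[ℝ] E} {f : ℝ → E}
  {a b C t : ℝ}

theorem integrableOn_Ici_const_mul_exp_mul (C : ℝ) {c : ℝ} (hc : c < 0) (t : ℝ) :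
    IntegrableOn (fun s => C * exp (c * s)) (Ici t) :=
  ((integrableOn_Ici_iff_integrableOn_Ioi).2 (integrableOn_exp_mul_Ioi hc t)).const_mul C

theorem norm_apply_le_mul_exp_of_norm_le {s : ℝ}
    (hT : ∀ x, ‖T (t - s) x‖ ≤ exp (a * (t - s)) * ‖x‖) (hf : ‖f s‖ ≤ C * exp (b * s)) :
    ‖T (t - s) (f s)‖ ≤ C * exp (a * t) * exp ((b - a) * s) := by
  have hexp : exp (a * (t - s)) * exp (b * s) = exp (a * t) * exp ((b - a) * s) := by
    rw [← exp_add, ← exp_add]; ring_nf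
  calc ‖T (t - s) (f s)‖ ≤ exp (a * (t - s)) * (C * exp (b * s)) :=
        (hT _).trans (mul_le_mul_of_nonneg_left hf (exp_pos _).le)
    _ = C * exp (a * t) * exp ((b - a) * s) := by linear_combination C * hexp

theorem integrableOn_Ici_apply_sub (hT : Continuous T)
    (hTa : ∀ τ ≤ 0, ∀ x, ‖T τ x‖ ≤ exp (a * τ) * ‖x‖) (hba : b < a)
    (hf : AEStronglyMeasurable f (volume.restrict (Ici t)))
    (hfb : ∀ s, t ≤ s → ‖f s‖ ≤ C * exp (b * s)) :
    IntegrableOn (fun s => T (t - s) (f s)) (Ici t) := by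
  have hdom := integrableOn_Ici_const_mul_exp_mul (C * exp (a * t)) (sub_neg.2 hba) t
  refine hdom.mono' ?_ ((ae_restrict_iff' measurableSet_Ici).2 (ae_of_all _ fun s hs => ?_))
  · exact (ContinuousLinearMap.id ℝ _).aestronglyMeasurable_comp₂
      ((hT.comp (continuous_const.sub continuous_id)).aestronglyMeasurable) hf
  · exact norm_apply_le_mul_exp_of_norm_le (hTa _ (by linarith [mem_Ici.1 hs])) (hfb s hs)

theorem norm_setIntegral_Ici_apply_sub_le
    (hTa : ∀ τ ≤ 0, ∀ x, ‖T τ x‖ ≤ exp (a * τ) * ‖x‖) (hba : b < a)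
    (hfb : ∀ s, t ≤ s → ‖f s‖ ≤ C * exp (b * s)) :
    ‖∫ s in Ici t, T (t - s) (f s)‖ ≤ C / (a - b) * exp (b * t) := by
  have hdom := integrableOn_Ici_const_mul_exp_mul (C * exp (a * t)) (sub_neg.2 hba) t
  refine (norm_integral_le_of_norm_le hdom
    ((ae_restrict_iff' measurableSet_Ici).2 (ae_of_all _ fun s hs =>
      norm_apply_le_mul_exp_of_norm_le (hTa _ (by linarith [mem_Ici.1 hs])) (hfb s hs)))).trans_eq ?_
  rw [integral_Ici_eq_integral_Ioi, integral_const_mul, integral_exp_mul_Ioi (by linarith),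
    show exp (b * t) = exp (a * t) * exp ((b - a) * t) by rw [← exp_add]; ring_nf]
  have : a - b ≠ 0 := by linarith
  have : b - a ≠ 0 := by linarith
  field_simp
  ring

theorem intervalIntegrable_apply_sub (hT : Continuous T)
    (hTa : ∀ τ ≥ 0, ∀ x, ‖T τ x‖ ≤ exp (a * τ) * ‖x‖) (ht : 0 ≤ t)
    (hf : AEStronglyMeasurable f (volume.restrict (Ioc 0 t)))
    (hfb : ∀ s ∈ Ioc 0 t, ‖f s‖ ≤ C * exp (b * s)) :
    IntervalIntegrable (fun s => T (t - s) (f s)) volume 0 t := by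
  have hdom : Continuous fun s => C * exp (a * t) * exp ((b - a) * s) := by fun_prop
  rw [intervalIntegrable_iff_integrableOn_Ioc_of_le ht]
  refine hdom.integrableOn_Ioc.mono' ?_
    ((ae_restrict_iff' measurableSet_Ioc).2 (ae_of_all _ fun s hs => ?_))
  · exact (ContinuousLinearMap.id ℝ _).aestronglyMeasurable_comp₂
      ((hT.comp (continuous_const.sub continuous_id)).aestronglyMeasurable) hf
  · exact norm_apply_le_mul_exp_of_norm_le (hTa _ (by linarith [hs.2])) (hfb s hs)

theorem norm_intervalIntegral_apply_sub_le
    (hTa : ∀ τ ≥ 0, ∀ x, ‖T τ x‖ ≤ exp (a * τ) * ‖x‖) (hab : a < b) (hC : 0 ≤ C) (ht : 0 ≤ t)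
    (hfb : ∀ s ∈ Ioc 0 t, ‖f s‖ ≤ C * exp (b * s)) :
    ‖∫ s in (0 : ℝ)..t, T (t - s) (f s)‖ ≤ C / (b - a) * exp (b * t) := by
  have hdom : Continuous fun s => C * exp (a * t) * exp ((b - a) * s) := by fun_prop
  refine (intervalIntegral.norm_integral_le_of_norm_le ht (ae_of_all _ fun s hs =>
      norm_apply_le_mul_exp_of_norm_le (hTa _ (by linarith [hs.2])) (hfb s hs))
    (hdom.intervalIntegrable 0 t)).trans ?_
  have hba : 0 < b - a := sub_pos.2 hab
  rw [intervalIntegral.integral_const_mul,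
    intervalIntegral.integral_comp_mul_left (fun s => exp s) hba.ne', integral_exp, mul_zero,
    exp_zero, smul_eq_mul]
  calc C * exp (a * t) * ((b - a)⁻¹ * (exp ((b - a) * t) - 1))
      ≤ C * exp (a * t) * ((b - a)⁻¹ * exp ((b - a) * t)) := by
        gcongr
        exact sub_le_self _ zero_le_one
    _ = C / (b - a) * exp (b * t) := by
        rw [show exp (b * t) = exp (a * t) * exp ((b - a) * t) by rw [← exp_add]; ring_nf]
        ring

end Convolution

theorem continuous_exp_smul_s7 {𝔸 : Type*} [NormedRing 𝔸] [NormedAlgebra ℝ 𝔸] [CompleteSpace 𝔸]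
    (x : 𝔸) : Continuous fun t : ℝ => NormedSpace.exp (t • x) :=
  continuous_iff_continuousAt.2 fun t => (hasDerivAt_exp_smul_const x t).continuousAt

theorem norm_Vzero_sub_le {E₁ E₂ : Type*} [NormedAddCommGroup E₁] [NormedSpace ℝ E₁]
    [NormedAddCommGroup E₂] {S : E₁ →L[ℝ] E₁} {Δg : ℝ → E₁ → E₂ → E₁} {h : E₁ → E₂} {L : ℝ}
    (hh : ∀ a b, ‖h a - h b‖ ≤ L * ‖a - b‖) (x0 : E₁) (y0 : E₂)
    (u ub : ℝ → E₁) (v vb : ℝ → E₂) :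
    ‖Vzero S Δg h x0 y0 u v - Vzero S Δg h x0 y0 ub vb‖ ≤
      L * ‖Jslow S Δg u v 0 - Jslow S Δg ub vb 0‖ := by
  simp only [Vzero, Jslow, zero_sub, add_sub_add_left_eq_sub]
  refine (hh _ _).trans_eq ?_
  congr 2
  abel

section TrackingOperator

variable [FiniteDimensional ℝ E₁] [MeasurableSpace E₁] [BorelSpace E₁]
  [FiniteDimensional ℝ E₂] [MeasurableSpace E₂] [BorelSpace E₂]
  {u ub : ℝ → E₁} {v vb : ℝ → E₂} {K β t : ℝ}

theorem norm_Jslow_sub_le {S : E₁ →L[ℝ] E₁} {γs : ℝ} {Δg : ℝ → E₁ → E₂ → E₁}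
    (hS : ∀ t ≤ (0:ℝ), ∀ x : E₁, ‖NormedSpace.exp (t • S) x‖ ≤ Real.exp (γs * t) * ‖x‖)
    (hβ : β < γs) (hK : 0 ≤ K) (hm : ∀ u v, Measurable fun t => Δg t u v)
    (hl : ∀ t u₁ v₁ u₂ v₂, ‖Δg t u₁ v₁ - Δg t u₂ v₂‖ ≤ K * (‖u₁ - u₂‖ + ‖v₁ - v₂‖))
    (h0 : ∀ t, Δg t 0 0 = 0) (hu : MemCpos β u) (hv : MemCpos β v) (hub : MemCpos β ub)
    (hvb : MemCpos β vb) (ht : 0 ≤ t) :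
    ‖Jslow S Δg u v t - Jslow S Δg ub vb t‖ ≤
      K * (posNorm β (fun t => u t - ub t) + posNorm β (fun t => v t - vb t)) / (γs - β) *
        exp (β * t) := by
  have hT : Continuous fun τ : ℝ => NormedSpace.exp (τ • S) := continuous_exp_smul_s7 S
  have hint : ∀ {x : ℝ → E₁} {y : ℝ → E₂}, MemCpos β x → MemCpos β y →
      IntegrableOn (fun s => NormedSpace.exp ((t - s) • S) (Δg s (x s) (y s))) (Ici t) :=
    fun hx hy => integrableOn_Ici_apply_sub hT hS hβ
      ((hx.aestronglyMeasurable_comp hm hl hy).mono_measure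
        (Measure.restrict_mono (Ici_subset_Ici.2 ht) le_rfl))
      fun s hs => norm_apply_le_of_memCpos hK hl h0 hx hy (ht.trans hs)
  rw [Jslow, Jslow, neg_sub_neg, norm_sub_rev, ← integral_sub (hint hu hv) (hint hub hvb)]
  simp_rw [← map_sub]
  exact norm_setIntegral_Ici_apply_sub_le (T := fun τ => NormedSpace.exp (τ • S)) hS hβ
    fun s hs => norm_apply_sub_apply_le_of_memCpos hK hl (hu.sub hub) (hv.sub hvb) (ht.trans hs)

theorem norm_Jfast_sub_le {S : E₁ →L[ℝ] E₁} {F : E₂ →L[ℝ] E₂} {γf ε : ℝ}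
    {Δg1 : ℝ → E₁ → E₂ → E₁} {Δg2 : ℝ → E₁ → E₂ → E₂} {h : E₁ → E₂} {x0 : E₁} {y0 : E₂}
    (hε : 0 < ε)
    (hF : ∀ t ≥ (0:ℝ), ∀ y : E₂, ‖NormedSpace.exp (t • F) y‖ ≤ Real.exp (γf * t) * ‖y‖)
    (hβ : γf < ε * β) (hK : 0 ≤ K) (hm : ∀ u v, Measurable fun t => Δg2 t u v)
    (hl : ∀ t u₁ v₁ u₂ v₂, ‖Δg2 t u₁ v₁ - Δg2 t u₂ v₂‖ ≤ K * (‖u₁ - u₂‖ + ‖v₁ - v₂‖))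
    (h0 : ∀ t, Δg2 t 0 0 = 0) (hu : MemCpos β u) (hv : MemCpos β v) (hub : MemCpos β ub)
    (hvb : MemCpos β vb) (ht : 0 ≤ t) :
    ‖Jfast S F Δg1 Δg2 h x0 y0 ε u v t - Jfast S F Δg1 Δg2 h x0 y0 ε ub vb t‖ ≤
      (‖Vzero S Δg1 h x0 y0 u v - Vzero S Δg1 h x0 y0 ub vb‖ +
        K * (posNorm β (fun t => u t - ub t) + posNorm β (fun t => v t - vb t)) / (ε * β - γf)) *
        exp (β * t) := by
  set N := posNorm β (fun t => u t - ub t) + posNorm β (fun t => v t - vb t)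
  set ΔV := Vzero S Δg1 h x0 y0 u v - Vzero S Δg1 h x0 y0 ub vb
  have hT : Continuous fun τ : ℝ => NormedSpace.exp ((τ / ε) • F) :=
    (continuous_exp_smul_s7 F).comp (continuous_id.div_const ε)
  have hTa : ∀ τ ≥ (0:ℝ), ∀ y, ‖NormedSpace.exp ((τ / ε) • F) y‖ ≤ exp (γf / ε * τ) * ‖y‖ :=
    fun τ hτ y => by simpa only [div_mul_eq_mul_div, mul_div_assoc] using hF _ (div_nonneg hτ hε.le) y
  have hab : γf / ε < β := (div_lt_iff₀' hε).2 hβ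
  have hint : ∀ {x : ℝ → E₁} {y : ℝ → E₂}, MemCpos β x → MemCpos β y → IntervalIntegrable
      (fun s => NormedSpace.exp (((t - s) / ε) • F) (Δg2 s (x s) (y s))) volume 0 t :=
    fun hx hy => intervalIntegrable_apply_sub hT hTa ht
      ((hx.aestronglyMeasurable_comp hm hl hy).mono_measure
        (Measure.restrict_mono (Ioc_subset_Ioi_self.trans Ioi_subset_Ici_self) le_rfl))
      fun s hs => norm_apply_le_of_memCpos hK hl h0 hx hy hs.1.le
  have hinit : ‖NormedSpace.exp ((t / ε) • F) (Vzero S Δg1 h x0 y0 u v) -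
      NormedSpace.exp ((t / ε) • F) (Vzero S Δg1 h x0 y0 ub vb)‖ ≤ ‖ΔV‖ * exp (β * t) := by
    rw [← map_sub, mul_comm]
    refine (hTa t ht _).trans (mul_le_mul_of_nonneg_right (exp_le_exp.2 ?_) (norm_nonneg _))
    exact mul_le_mul_of_nonneg_right hab.le ht
  have hforced : ‖(1 / ε) • (∫ s in (0:ℝ)..t,
        NormedSpace.exp (((t - s) / ε) • F) (Δg2 s (u s) (v s))) -
      (1 / ε) • ∫ s in (0:ℝ)..t, NormedSpace.exp (((t - s) / ε) • F) (Δg2 s (ub s) (vb s))‖ ≤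
      K * N / (ε * β - γf) * exp (β * t) := by
    rw [← smul_sub, ← intervalIntegral.integral_sub (hint hu hv) (hint hub hvb), norm_smul]
    simp_rw [← map_sub]
    calc _ ≤ ‖1 / ε‖ * (K * N / (β - γf / ε) * exp (β * t)) := by
          gcongr
          exact norm_intervalIntegral_apply_sub_le (T := fun τ => NormedSpace.exp ((τ / ε) • F))
            hTa hab (mul_nonneg hK (add_nonneg (posNorm_nonneg _ _) (posNorm_nonneg _ _))) ht
            fun s hs => norm_apply_sub_apply_le_of_memCpos hK hl (hu.sub hub) (hv.sub hvb) hs.1.le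
      _ = K * N / (ε * β - γf) * exp (β * t) := by
          rw [Real.norm_of_nonneg (one_div_nonneg.2 hε.le)]
          field_simp
  calc _ = ‖(NormedSpace.exp ((t / ε) • F) (Vzero S Δg1 h x0 y0 u v) -
          NormedSpace.exp ((t / ε) • F) (Vzero S Δg1 h x0 y0 ub vb)) +
        ((1 / ε) • (∫ s in (0:ℝ)..t,
          NormedSpace.exp (((t - s) / ε) • F) (Δg2 s (u s) (v s))) -
        (1 / ε) • ∫ s in (0:ℝ)..t,
          NormedSpace.exp (((t - s) / ε) • F) (Δg2 s (ub s) (vb s)))‖ := by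
        rw [Jfast, Jfast, add_sub_add_comm]
    _ ≤ ‖ΔV‖ * exp (β * t) + K * N / (ε * β - γf) * exp (β * t) :=
        (norm_add_le _ _).trans (add_le_add hinit hforced)
    _ = (‖ΔV‖ + K * N / (ε * β - γf)) * exp (β * t) := by ring

end TrackingOperator

theorem tracking_operator_contraction_general
    {E₁ E₂ : Type*}
    [NormedAddCommGroup E₁] [NormedSpace ℝ E₁] [FiniteDimensional ℝ E₁] [MeasurableSpace E₁] [BorelSpace E₁]
    [NormedAddCommGroup E₂] [NormedSpace ℝ E₂] [FiniteDimensional ℝ E₂] [MeasurableSpace E₂] [BorelSpace E₂]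
    (S : E₁ →L[ℝ] E₁) (F : E₂ →L[ℝ] E₂)
    (γs γf γ K ε : ℝ)
    (hγs : 0 < γs) (hγ : 0 < γ) (hK : 0 < K)
    (hgap : K < -(γ + γf)) (hε : 0 < ε)
    (hS : ∀ t ≤ (0:ℝ), ∀ x : E₁, ‖NormedSpace.exp (t • S) x‖ ≤ Real.exp (γs * t) * ‖x‖)
    (hF : ∀ t ≥ (0:ℝ), ∀ y : E₂, ‖NormedSpace.exp (t • F) y‖ ≤ Real.exp (γf * t) * ‖y‖)
    (hρ : (ε * K / (γ + ε * γs) - K / (γ + γf)) < 1)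
    (Δg1 : ℝ → E₁ → E₂ → E₁) (Δg2 : ℝ → E₁ → E₂ → E₂)
    (hm1 : ∀ u v, Measurable fun t => Δg1 t u v)
    (hm2 : ∀ u v, Measurable fun t => Δg2 t u v)
    (hl1 : ∀ t u₁ v₁ u₂ v₂, ‖Δg1 t u₁ v₁ - Δg1 t u₂ v₂‖ ≤ K * (‖u₁ - u₂‖ + ‖v₁ - v₂‖))
    (hl2 : ∀ t u₁ v₁ u₂ v₂, ‖Δg2 t u₁ v₁ - Δg2 t u₂ v₂‖ ≤ K * (‖u₁ - u₂‖ + ‖v₁ - v₂‖))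
    (h01 : ∀ t, Δg1 t 0 0 = 0) (h02 : ∀ t, Δg2 t 0 0 = 0)
    (h : E₁ → E₂)
    (hhl : ∀ a b : E₁,
      ‖h a - h b‖ ≤ (-K / (γ + γf)) * (1 / (1 - (ε * K / (γ + ε * γs) - K / (γ + γf)))) * ‖a - b‖)
    (x0 : E₁) (y0 : E₂) :
    ∀ (u : ℝ → E₁) (v : ℝ → E₂) (ub : ℝ → E₁) (vb : ℝ → E₂),
      MemCpos (-γ/ε) u → MemCpos (-γ/ε) v → MemCpos (-γ/ε) ub → MemCpos (-γ/ε) vb →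
      posNorm (-γ/ε) (fun t => Jslow S Δg1 u v t - Jslow S Δg1 ub vb t) +
        posNorm (-γ/ε) (fun t =>
          Jfast S F Δg1 Δg2 h x0 y0 ε u v t - Jfast S F Δg1 Δg2 h x0 y0 ε ub vb t) ≤
      ((ε * K / (γ + ε * γs) - K / (γ + γf)) - ε * K ^ 2 / ((γ + ε * γs) * (γ + γf) * (1 - (ε * K / (γ + ε * γs) - K / (γ + γf))))) *
        (posNorm (-γ/ε) (fun t => u t - ub t) + posNorm (-γ/ε) (fun t => v t - vb t)) := by
  intro u v ub vb hu hv hub hvb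
  set ρ := ε * K / (γ + ε * γs) - K / (γ + γf) with hρ_def
  set N := posNorm (-γ/ε) (fun t => u t - ub t) + posNorm (-γ/ε) (fun t => v t - vb t)
  have hγγf : γ + γf < 0 := by linarith
  have hβs : -γ / ε < γs := (div_neg_of_neg_of_pos (neg_neg_of_pos hγ) hε).trans hγs
  have hβf : γf < ε * (-γ / ε) := by rw [mul_div_cancel₀ _ hε.ne']; linarith
  have hL : 0 ≤ -K / (γ + γf) * (1 / (1 - ρ)) :=
    mul_nonneg (div_nonneg_of_nonpos (by linarith) hγγf.le) (one_div_nonneg.2 (by linarith))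
  have hslow := fun t (ht : 0 ≤ t) => norm_Jslow_sub_le hS hβs hK.le hm1 hl1 h01 hu hv hub hvb ht
  have hV : ‖Vzero S Δg1 h x0 y0 u v - Vzero S Δg1 h x0 y0 ub vb‖ ≤
      -K / (γ + γf) * (1 / (1 - ρ)) * (K * N / (γs - -γ / ε)) := by
    simpa only [mul_zero, exp_zero, mul_one] using (norm_Vzero_sub_le hhl x0 y0 u ub v vb).trans
      (mul_le_mul_of_nonneg_left (hslow 0 le_rfl) hL)
  calc _ ≤ K * N / (γs - -γ / ε) + (-K / (γ + γf) * (1 / (1 - ρ)) * (K * N / (γs - -γ / ε)) +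
        K * N / (ε * (-γ / ε) - γf)) :=
      add_le_add (posNorm_le_of_norm_le hslow)
        (posNorm_le_of_norm_le fun t ht =>
          (norm_Jfast_sub_le hε hF hβf hK.le hm2 hl2 h02 hu hv hub hvb ht).trans
            (mul_le_mul_of_nonneg_right (add_le_add hV le_rfl) (exp_pos _).le))
    _ = _ := by
      have hslow_rate : γs - -γ / ε = (γ + ε * γs) / ε := by field_simp; ring
      have hfast_rate : ε * (-γ / ε) - γf = -(γ + γf) := by field_simp; ring
      have : γ + ε * γs ≠ 0 := by positivity
      have : 1 - ρ ≠ 0 := by linarith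
      rw [hslow_rate, hfast_rate]
      field_simp
      rw [hρ_def]
      field_simp
      ring

/-- The tracking Lyapunov–Perron operator `J^ε` is `ρ̄(ε)`-Lipschitz
on `C_β^+`. -/
theorem tracking_operator_contraction
    {E₁ E₂ : Type*}
    [NormedAddCommGroup E₁] [NormedSpace ℝ E₁] [FiniteDimensional ℝ E₁] [MeasurableSpace E₁] [BorelSpace E₁]
    [NormedAddCommGroup E₂] [NormedSpace ℝ E₂] [FiniteDimensional ℝ E₂] [MeasurableSpace E₂] [BorelSpace E₂]
    (S : E₁ →L[ℝ] E₁) (F : E₂ →L[ℝ] E₂)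
    (γs γf γ K ε : ℝ)
    (hγs : 0 < γs) (hγf : γf < 0) (hγ : 0 < γ) (hK : 0 < K)
    (hgap : K < -(γ + γf)) (hε : 0 < ε)
    (hS : ∀ t ≤ (0:ℝ), ∀ x : E₁, ‖NormedSpace.exp (t • S) x‖ ≤ Real.exp (γs * t) * ‖x‖)
    (hF : ∀ t ≥ (0:ℝ), ∀ y : E₂, ‖NormedSpace.exp (t • F) y‖ ≤ Real.exp (γf * t) * ‖y‖)
    (hρ : (ε * K / (γ + ε * γs) - K / (γ + γf)) < 1)
    (Δg1 : ℝ → E₁ → E₂ → E₁) (Δg2 : ℝ → E₁ → E₂ → E₂)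
    (hm1 : ∀ u v, Measurable fun t => Δg1 t u v)
    (hm2 : ∀ u v, Measurable fun t => Δg2 t u v)
    (hl1 : ∀ t u₁ v₁ u₂ v₂, ‖Δg1 t u₁ v₁ - Δg1 t u₂ v₂‖ ≤ K * (‖u₁ - u₂‖ + ‖v₁ - v₂‖))
    (hl2 : ∀ t u₁ v₁ u₂ v₂, ‖Δg2 t u₁ v₁ - Δg2 t u₂ v₂‖ ≤ K * (‖u₁ - u₂‖ + ‖v₁ - v₂‖))
    (h01 : ∀ t, Δg1 t 0 0 = 0) (h02 : ∀ t, Δg2 t 0 0 = 0)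
    (h : E₁ → E₂)
    (hhl : ∀ a b : E₁,
      ‖h a - h b‖ ≤ (-K / (γ + γf)) * (1 / (1 - (ε * K / (γ + ε * γs) - K / (γ + γf)))) * ‖a - b‖)
    (x0 : E₁) (y0 : E₂) :
    ∀ (u : ℝ → E₁) (v : ℝ → E₂) (ub : ℝ → E₁) (vb : ℝ → E₂),
      MemCpos (-γ/ε) u → MemCpos (-γ/ε) v → MemCpos (-γ/ε) ub → MemCpos (-γ/ε) vb →
      posNorm (-γ/ε) (fun t => Jslow S Δg1 u v t - Jslow S Δg1 ub vb t) +
        posNorm (-γ/ε) (fun t =>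
          Jfast S F Δg1 Δg2 h x0 y0 ε u v t - Jfast S F Δg1 Δg2 h x0 y0 ε ub vb t) ≤
      ((ε * K / (γ + ε * γs) - K / (γ + γf)) - ε * K ^ 2 / ((γ + ε * γs) * (γ + γf) * (1 - (ε * K / (γ + ε * γs) - K / (γ + γf))))) *
        (posNorm (-γ/ε) (fun t => u t - ub t) + posNorm (-γ/ε) (fun t => v t - vb t)) :=
  tracking_operator_contraction_general S F γs γf γ K ε hγs hγ hK hgap hε hS hF hρ Δg1 Δg2 hm1 hm2
    hl1 hl2 h01 h02 h hhl x0 y0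
end
end

section
/- Assume moreover that ‖g₁(x,y)‖ ≤ C for all (x,y), for some constant C > 0, and that ρ(ε) < 1. Let (x̃^ε, ỹ^ε) ∈ C_{−γ}^−(E₁ × E₂) be the unique solution of the time-rescaled slow–fast integral system with initial slow value x₀. Then for all t ≤ 0, ‖x̃^ε(t) − x₀‖ ≤ C₁·(1 − e^{εγ_s t}), where C₁ := (‖Sx₀‖ + C)/γ_s. -/
open MeasureTheory Real Filter

noncomputable section

variable {E₁ E₂ : Type*}
  [NormedAddCommGroup E₁] [NormedSpace ℝ E₁]
  [NormedAddCommGroup E₂] [NormedSpace ℝ E₂]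

/-- Slow component of the time-rescaled slow–fast integral system. -/
def RSslow (S : E₁ →L[ℝ] E₁) (g1 : E₁ → E₂ → E₁) (σ ε : ℝ) (ξ : ℝ → E₂) (x0 : E₁)
    (x : ℝ → E₁) (y : ℝ → E₂) (t : ℝ) : E₁ :=
  NormedSpace.exp ((ε * t) • S) x0 +
    ε • ∫ s in (0:ℝ)..t, NormedSpace.exp ((ε * (t - s)) • S) (g1 (x s) (y s + σ • ξ s))

/-- Fast component of the time-rescaled slow–fast integral system. -/
def RSfast (F : E₂ →L[ℝ] E₂) (g2 : E₁ → E₂ → E₂) (σ : ℝ) (ξ : ℝ → E₂)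
    (x : ℝ → E₁) (y : ℝ → E₂) (t : ℝ) : E₂ :=
  ∫ s in Set.Iic t, NormedSpace.exp ((t - s) • F) (g2 (x s) (y s + σ • ξ s))

/-- Right-hand side of the critical (`ε = 0`) integral equation. -/
def Crit (F : E₂ →L[ℝ] E₂) (g2 : E₁ → E₂ → E₂) (σ : ℝ) (ξ : ℝ → E₂) (x0 : E₁)
    (y : ℝ → E₂) (t : ℝ) : E₂ :=
  ∫ s in Set.Iic t, NormedSpace.exp ((t - s) • F) (g2 x0 (y s + σ • ξ s))

/-!
Split `x̃(t) - x₀ = (exp(εtS)x₀ - x₀) + ε∫₀ᵗ exp(ε(t-s)S) g₁ ds`.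
The first term is `∫₀^{εt} exp(uS) S x₀ du`, and the substitution `u = ε(t - s)` turns the
second into `∫₀^{εt} exp(uS) g₁ du`. Both are integrals over `[εt, 0]` of `exp(uS)` applied to
vectors of norm at most `‖S x₀‖`, resp. `C`, and `‖exp(uS)‖ ≤ e^{γ_s u}` there, so each is
bounded by that constant times `∫_{εt}^0 e^{γ_s u} du = (1 - e^{εγ_s t})/γ_s`.
-/

open intervalIntegral

theorem integral_exp_const_mul {c : ℝ} (hc : c ≠ 0) (a b : ℝ) :
    ∫ u in a..b, Real.exp (c * u) = (Real.exp (c * b) - Real.exp (c * a)) / c := by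
  rw [integral_comp_mul_left (fun u => Real.exp u) hc, integral_exp, smul_eq_mul,
    inv_mul_eq_div]

section ExpSmul

variable {E : Type*} [NormedAddCommGroup E] [NormedSpace ℝ E] (S : E →L[ℝ] E) {γ : ℝ}

theorem hasDerivAt_exp_smul_apply [CompleteSpace E] (x : E) (u : ℝ) :
    HasDerivAt (fun u : ℝ => NormedSpace.exp (u • S) x) (NormedSpace.exp (u • S) (S x)) u := by
  simpa using (hasDerivAt_exp_smul_const (𝕂 := ℝ) S u).clm_apply (hasDerivAt_const u x)

theorem exp_smul_apply_sub_self [CompleteSpace E] (x : E) (τ : ℝ) :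
    NormedSpace.exp (τ • S) x - x = ∫ u in (0 : ℝ)..τ, NormedSpace.exp (u • S) (S x) := by
  have hcont : Continuous fun u : ℝ => NormedSpace.exp (u • S) (S x) :=
    continuous_iff_continuousAt.2 fun u => (hasDerivAt_exp_smul_apply S (S x) u).continuousAt
  rw [integral_eq_sub_of_hasDerivAt (fun u _ => hasDerivAt_exp_smul_apply S x u)
    (hcont.intervalIntegrable _ _)]
  simp [NormedSpace.exp_zero]

theorem norm_integral_exp_smul_apply_le
    (hS : ∀ u ≤ (0 : ℝ), ∀ x : E, ‖NormedSpace.exp (u • S) x‖ ≤ Real.exp (γ * u) * ‖x‖)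
    (hγ : γ ≠ 0) {τ M : ℝ} (hτ : τ ≤ 0) {f : ℝ → E} (hf : ∀ u ∈ Set.Ioc τ 0, ‖f u‖ ≤ M) :
    ‖∫ u in τ..0, NormedSpace.exp (u • S) (f u)‖ ≤ M * ((1 - Real.exp (γ * τ)) / γ) := by
  have hbound : ∀ u ∈ Set.Ioc τ 0,
      ‖NormedSpace.exp (u • S) (f u)‖ ≤ Real.exp (γ * u) * M := fun u hu =>
    (hS u hu.2 _).trans (mul_le_mul_of_nonneg_left (hf u hu) (Real.exp_pos _).le)
  have hint : IntervalIntegrable (fun u => Real.exp (γ * u) * M) volume τ 0 :=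
    (by fun_prop : Continuous fun u => Real.exp (γ * u) * M).intervalIntegrable _ _
  refine (intervalIntegral.norm_integral_le_of_norm_le hτ (.of_forall hbound) hint).trans_eq ?_
  rw [intervalIntegral.integral_mul_const, integral_exp_const_mul hγ, mul_zero, Real.exp_zero,
    mul_comm]

theorem norm_exp_smul_apply_sub_self_le [CompleteSpace E]
    (hS : ∀ u ≤ (0 : ℝ), ∀ x : E, ‖NormedSpace.exp (u • S) x‖ ≤ Real.exp (γ * u) * ‖x‖)
    (hγ : γ ≠ 0) {τ : ℝ} (hτ : τ ≤ 0) (x : E) :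
    ‖NormedSpace.exp (τ • S) x - x‖ ≤ ‖S x‖ * ((1 - Real.exp (γ * τ)) / γ) := by
  rw [exp_smul_apply_sub_self, integral_symm, norm_neg]
  exact norm_integral_exp_smul_apply_le S hS hγ hτ fun _ _ => le_rfl

theorem smul_integral_exp_mul_sub_smul_apply {ε : ℝ} (hε : ε ≠ 0) (f : ℝ → E) (t : ℝ) :
    ε • ∫ s in (0 : ℝ)..t, NormedSpace.exp ((ε * (t - s)) • S) (f s) =
      ∫ u in (0 : ℝ)..ε * t, NormedSpace.exp (u • S) (f (t - u / ε)) := by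
  have hsub : ∀ s, t - (ε * t - ε * s) / ε = s := fun s => by field_simp; ring
  simpa [mul_sub, hsub] using smul_integral_comp_sub_mul (a := 0) (b := t)
    (fun u => NormedSpace.exp (u • S) (f (t - u / ε))) ε (ε * t)

theorem norm_smul_integral_exp_mul_sub_smul_apply_le
    (hS : ∀ u ≤ (0 : ℝ), ∀ x : E, ‖NormedSpace.exp (u • S) x‖ ≤ Real.exp (γ * u) * ‖x‖)
    (hγ : γ ≠ 0) {ε t M : ℝ} (hε : 0 < ε) (ht : t ≤ 0) {f : ℝ → E} (hf : ∀ s, ‖f s‖ ≤ M) :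
    ‖ε • ∫ s in (0 : ℝ)..t, NormedSpace.exp ((ε * (t - s)) • S) (f s)‖ ≤
      M * ((1 - Real.exp (γ * (ε * t))) / γ) := by
  rw [smul_integral_exp_mul_sub_smul_apply S hε.ne', integral_symm, norm_neg]
  exact norm_integral_exp_smul_apply_le S hS hγ (mul_nonpos_of_nonneg_of_nonpos hε.le ht)
    fun _ _ => hf _

end ExpSmul

theorem rescaled_slow_component_estimate_general
    {E₁ E₂ : Type*}
    [NormedAddCommGroup E₁] [NormedSpace ℝ E₁] [FiniteDimensional ℝ E₁]
    [NormedAddCommGroup E₂] [NormedSpace ℝ E₂]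
    (S : E₁ →L[ℝ] E₁) (F : E₂ →L[ℝ] E₂)
    (γs σ : ℝ)
    (hγs : 0 < γs)
    (hS : ∀ t ≤ (0:ℝ), ∀ x : E₁, ‖NormedSpace.exp (t • S) x‖ ≤ Real.exp (γs * t) * ‖x‖)
    (g1 : E₁ → E₂ → E₁) (g2 : E₁ → E₂ → E₂)
    (ξ : ℝ → E₂)
    (ε : ℝ) (hε : 0 < ε)
    (C : ℝ) (hg1bd : ∀ x y, ‖g1 x y‖ ≤ C)
    (x0 : E₁) (xt : ℝ → E₁) (yt : ℝ → E₂)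
    (hsol : ∀ t ≤ (0:ℝ), xt t = RSslow S g1 σ ε ξ x0 xt yt t ∧
      yt t = RSfast F g2 σ ξ xt yt t) :
    ∀ t ≤ (0:ℝ), ‖xt t - x0‖ ≤ (‖S x0‖ + C) / γs * (1 - Real.exp (ε * γs * t)) := by
  intro t ht
  have hεt : ε * t ≤ 0 := mul_nonpos_of_nonneg_of_nonpos hε.le ht
  have hexp : γs * (ε * t) = ε * γs * t := by ring
  rw [(hsol t ht).1, RSslow, add_sub_right_comm]
  calc _ ≤ ‖NormedSpace.exp ((ε * t) • S) x0 - x0‖ +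
        ‖ε • ∫ s in (0:ℝ)..t, NormedSpace.exp ((ε * (t - s)) • S) (g1 (xt s) (yt s + σ • ξ s))‖ :=
        norm_add_le _ _
    _ ≤ ‖S x0‖ * ((1 - Real.exp (γs * (ε * t))) / γs) +
        C * ((1 - Real.exp (γs * (ε * t))) / γs) :=
        add_le_add (norm_exp_smul_apply_sub_self_le S hS hγs.ne' hεt x0)
          (norm_smul_integral_exp_mul_sub_smul_apply_le S hS hγs.ne' hε ht fun _ => hg1bd _ _)
    _ = (‖S x0‖ + C) / γs * (1 - Real.exp (ε * γs * t)) := by rw [hexp]; ring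

/-- If `‖g₁‖ ≤ C` then the slow component of the rescaled solution
stays close to its initial value: `‖x̃^ε(t) - x₀‖ ≤ C₁(1 - e^{εγ_s t})` for `t ≤ 0`. -/
theorem rescaled_slow_component_estimate
    {E₁ E₂ : Type*}
    [NormedAddCommGroup E₁] [NormedSpace ℝ E₁] [FiniteDimensional ℝ E₁] [MeasurableSpace E₁] [BorelSpace E₁]
    [NormedAddCommGroup E₂] [NormedSpace ℝ E₂] [FiniteDimensional ℝ E₂] [MeasurableSpace E₂] [BorelSpace E₂]
    (S : E₁ →L[ℝ] E₁) (F : E₂ →L[ℝ] E₂)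
    (γs γf γ K σ : ℝ)
    (hγs : 0 < γs) (hγf : γf < 0) (hγ : 0 < γ) (hK : 0 < K)
    (hgap : K < -(γ + γf)) (hσ : 0 ≤ σ)
    (hS : ∀ t ≤ (0:ℝ), ∀ x : E₁, ‖NormedSpace.exp (t • S) x‖ ≤ Real.exp (γs * t) * ‖x‖)
    (hF : ∀ t ≥ (0:ℝ), ∀ y : E₂, ‖NormedSpace.exp (t • F) y‖ ≤ Real.exp (γf * t) * ‖y‖)
    (g1 : E₁ → E₂ → E₁) (g2 : E₁ → E₂ → E₂)
    (hg1l : ∀ x₁ y₁ x₂ y₂, ‖g1 x₁ y₁ - g1 x₂ y₂‖ ≤ K * (‖x₁ - x₂‖ + ‖y₁ - y₂‖))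
    (hg2l : ∀ x₁ y₁ x₂ y₂, ‖g2 x₁ y₁ - g2 x₂ y₂‖ ≤ K * (‖x₁ - x₂‖ + ‖y₁ - y₂‖))
    (hg10 : g1 0 0 = 0) (hg20 : g2 0 0 = 0)
    (ξ : ℝ → E₂) (hξm : Measurable ξ)
    (hξb : ∀ r : ℝ, ∃ M, ∀ t : ℝ, |t| ≤ r → ‖ξ t‖ ≤ M)
    (hξ : ∃ M, ∀ t ≤ (0:ℝ), Real.exp (γ * t) * ‖ξ t‖ ≤ M)
    (ε : ℝ) (hε : 0 < ε) (hρ : (ε * K / (γ + ε * γs) - K / (γ + γf)) < 1)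
    (C : ℝ) (hC : 0 < C) (hg1bd : ∀ x y, ‖g1 x y‖ ≤ C)
    (x0 : E₁) (xt : ℝ → E₁) (yt : ℝ → E₂)
    (hmem : MemCneg (-γ) xt ∧ MemCneg (-γ) yt)
    (hsol : ∀ t ≤ (0:ℝ), xt t = RSslow S g1 σ ε ξ x0 xt yt t ∧
      yt t = RSfast F g2 σ ξ xt yt t) :
    ∀ t ≤ (0:ℝ), ‖xt t - x0‖ ≤ (‖S x0‖ + C) / γs * (1 - Real.exp (ε * γs * t)) :=
  rescaled_slow_component_estimate_general S F γs σ hγs hS g1 g2 ξ ε hε C hg1bd x0 xt yt hsol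
end
end

section
/- Let γ > 0, γ_s > 0, γ_f < 0. For ε > 0 and t ≤ 0 define q(t, ε) := e^{(γ+εγ_s)t}/(γ_f − εγ_s) − e^{γt}/γ_f. Then q(t, ε) ≥ 0 for all t ≤ 0 and all ε > 0, and lim_{ε→0⁺} sup_{t≤0} q(t, ε) = 0. -/
/-!
Writing `d = ε γ_s`, the kernel is `x / (γ_f - d) - y / γ_f` with `x = e^{(γ+d)t} ≤ y = e^{γt} ≤ 1`.
It splits as `(y - x) / |γ_f| + x d / (γ_f (γ_f - d))`, a sum of nonnegative terms. The second is
at most `d / γ_f²`, and `y - x = e^{γt} (1 - e^{dt}) ≤ d · (-t) e^{γt} ≤ d / γ`, so the kernel is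
`O(ε)` uniformly in `t ≤ 0`.
-/

open Filter Real Topology

theorem neg_mul_exp_mul_le_inv {γ : ℝ} (hγ : 0 < γ) (t : ℝ) : -t * exp (γ * t) ≤ γ⁻¹ := by
  have h : γ * -t ≤ exp (-(γ * t)) := by linarith [add_one_le_exp (-(γ * t))]
  calc -t * exp (γ * t) = γ⁻¹ * ((γ * -t) * exp (γ * t)) := by field_simp
    _ ≤ γ⁻¹ * (exp (-(γ * t)) * exp (γ * t)) := by gcongr
    _ = γ⁻¹ := by rw [← exp_add, neg_add_cancel, exp_zero, mul_one]

theorem exp_mul_sub_exp_add_mul_le {γ d : ℝ} (hγ : 0 < γ) (hd : 0 ≤ d) (t : ℝ) :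
    exp (γ * t) - exp ((γ + d) * t) ≤ d / γ :=
  calc exp (γ * t) - exp ((γ + d) * t) = exp (γ * t) * (1 - exp (d * t)) := by
        rw [add_mul, exp_add]; ring
    _ ≤ exp (γ * t) * -(d * t) := by gcongr; linarith [add_one_le_exp (d * t)]
    _ = d * (-t * exp (γ * t)) := by ring
    _ ≤ d * γ⁻¹ := by gcongr; exact neg_mul_exp_mul_le_inv hγ t
    _ = d / γ := rfl

theorem div_sub_div_neg_nonneg {c d x y : ℝ} (hc : c < 0) (hd : 0 ≤ d) (hx : 0 ≤ x)
    (hxy : x ≤ y) : 0 ≤ x / (c - d) - y / c := by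
  have hle : x / (d - c) ≤ y / -c := by gcongr <;> linarith
  rw [div_neg] at hle
  rw [← neg_sub d c, div_neg]
  linarith

theorem div_sub_div_neg_le {c d x y : ℝ} (hc : c < 0) (hd : 0 ≤ d) (hx : x ≤ 1) :
    x / (c - d) - y / c ≤ (y - x) / -c + d / c ^ 2 := by
  have hcd : c - d < 0 := by linarith
  have hsplit : x / (c - d) - y / c = (y - x) / -c + x * (d / (c * (c - d))) := by
    field_simp [hc.ne, hcd.ne]; ring
  have : x * (d / (c * (c - d))) ≤ 1 * (d / c ^ 2) := by
    gcongr
    · exact div_nonneg hd (mul_nonneg_of_nonpos_of_nonpos hc.le hcd.le)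
    · exact sq_pos_of_neg hc
    · nlinarith [mul_nonpos_of_nonpos_of_nonneg hc.le hd]
  linarith

noncomputable def kernelQ (γ γs γf ε t : ℝ) : ℝ :=
  exp ((γ + ε * γs) * t) / (γf - ε * γs) - exp (γ * t) / γf

section kernelQ

variable {γ γs γf ε t : ℝ}

theorem kernelQ_nonneg (hγs : 0 ≤ γs) (hγf : γf < 0) (hε : 0 ≤ ε) (ht : t ≤ 0) :
    0 ≤ kernelQ γ γs γf ε t :=
  div_sub_div_neg_nonneg hγf (mul_nonneg hε hγs) (exp_pos _).le <|
    exp_le_exp.2 <| by nlinarith [mul_nonpos_of_nonneg_of_nonpos (mul_nonneg hε hγs) ht]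

theorem kernelQ_le (hγ : 0 < γ) (hγs : 0 ≤ γs) (hγf : γf < 0) (hε : 0 ≤ ε) (ht : t ≤ 0) :
    kernelQ γ γs γf ε t ≤ ε * (γs / (γ * -γf) + γs / γf ^ 2) := by
  have hd : 0 ≤ ε * γs := mul_nonneg hε hγs
  have hx₁ : exp ((γ + ε * γs) * t) ≤ 1 :=
    exp_le_one_iff.2 <| mul_nonpos_of_nonneg_of_nonpos (by linarith) ht
  calc kernelQ γ γs γf ε t
      ≤ (exp (γ * t) - exp ((γ + ε * γs) * t)) / -γf + ε * γs / γf ^ 2 :=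
        div_sub_div_neg_le hγf hd hx₁
    _ ≤ ε * γs / γ / -γf + ε * γs / γf ^ 2 := by
        gcongr
        · linarith
        · exact exp_mul_sub_exp_add_mul_le hγ hd t
    _ = ε * (γs / (γ * -γf) + γs / γf ^ 2) := by ring

theorem tendsto_iSup_kernelQ (hγ : 0 < γ) (hγs : 0 ≤ γs) (hγf : γf < 0) :
    Tendsto (fun ε ↦ ⨆ t : Set.Iic (0 : ℝ), kernelQ γ γs γf ε t) (𝓝[>] 0) (𝓝 0) := by
  set C := γs / (γ * -γf) + γs / γf ^ 2
  have hlim : Tendsto (fun ε : ℝ ↦ ε * C) (𝓝[>] 0) (𝓝 0) :=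
    tendsto_nhdsWithin_of_tendsto_nhds <| (continuous_mul_const C).tendsto' 0 0 (zero_mul C)
  refine squeeze_zero' ?_ ?_ hlim <;> filter_upwards [self_mem_nhdsWithin] with ε hε
  · exact Real.iSup_nonneg fun t ↦ kernelQ_nonneg hγs hγf (le_of_lt hε) t.2
  · exact ciSup_le fun t ↦ kernelQ_le hγ hγs hγf (le_of_lt hε) t.2

end kernelQ

/-- The kernel `q(t,ε) = e^{(γ+εγ_s)t}/(γ_f-εγ_s) - e^{γt}/γ_f` is
nonnegative for `t ≤ 0`, and `sup_{t≤0} q(t,ε) → 0` as `ε → 0⁺`. -/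
theorem kernel_q_nonneg_and_sup_tendsto_zero
    (γ γs γf : ℝ) (hγ : 0 < γ) (hγs : 0 < γs) (hγf : γf < 0) :
    (∀ ε > (0:ℝ), ∀ t ≤ (0:ℝ),
      0 ≤ Real.exp ((γ + ε * γs) * t) / (γf - ε * γs) - Real.exp (γ * t) / γf) ∧
    Tendsto (fun ε : ℝ => ⨆ t : Set.Iic (0:ℝ),
        (Real.exp ((γ + ε * γs) * t.1) / (γf - ε * γs) - Real.exp (γ * t.1) / γf))
      (nhdsWithin 0 (Set.Ioi 0)) (nhds 0) :=
  ⟨fun _ hε _ ht ↦ kernelQ_nonneg hγs.le hγf hε.le ht, tendsto_iSup_kernelQ hγ hγs.le hγf⟩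
end
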